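/- If G is a connected graph with B(G) < 1 (a low-betweenness BUG when betweenness-uniform), then its complement Ḡ has strictly fewer edges than vertices. -/

import Mathlib

open SimpleGraph Finset BigOperators

namespace BUG

variable {V : Type*}

/-- Number of shortest `v`–`w` paths (walks of length `dist v w`). -/
noncomputable def sigma (G : SimpleGraph V) (v w : V) : ℕ :=
  Nat.card {p : G.Walk v w // p.length = G.dist v w}

/-- Number of shortest `v`–`w` paths containing `x` as an internal vertex. -/
noncomputable def sigmaVia (G : SimpleGraph V) (v w x : V) : ℕ :=
  Nat.card {p : G.Walk v w // p.length = G.dist v w ∧ x ∈ p.support ∧ x ≠ v ∧ x ≠ w}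

/-- Betweenness centrality of a vertex. -/
noncomputable def btw [Fintype V] [DecidableEq V] (G : SimpleGraph V) (x : V) : ℝ :=
  (1/2) * ∑ v : V, ∑ w : V,
    if v ≠ w then (sigmaVia G v w x : ℝ) / (sigma G v w : ℝ) else 0

/-- Average betweenness centrality of a graph. -/
noncomputable def avgBtw [Fintype V] [DecidableEq V] (G : SimpleGraph V) : ℝ :=
  (∑ x : V, btw G x) / (Fintype.card V)

/-- A graph is betweenness-uniform (a BUG) if all vertices have equal betweenness. -/
def IsBUG [Fintype V] [DecidableEq V] (G : SimpleGraph V) : Prop :=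
  ∀ x y : V, btw G x = btw G y

/-- Vertices close to the edge `e`: its endpoints and their neighbours. -/
def closeSet (H : SimpleGraph V) (e : Sym2 V) : Set V :=
  {v | ∃ u ∈ e, v = u ∨ H.Adj v u}

/-- Edges close to the vertex `x`. -/
def closeEdges (H : SimpleGraph V) (x : V) : Set (Sym2 V) :=
  {e ∈ H.edgeSet | x ∈ closeSet H e}

/-- Weight of an edge: `1/(n - |closeSet e|)`. -/
noncomputable def weight [Fintype V] (H : SimpleGraph V) (e : Sym2 V) : ℝ :=
  1 / ((Fintype.card V : ℝ) - (closeSet H e).ncard)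

open Classical in
/-- Co-betweenness of a vertex: total weight of the edges close to it. -/
noncomputable def coB [Fintype V] [DecidableEq V] (H : SimpleGraph V) (x : V) : ℝ :=
  ∑ e : Sym2 V, if e ∈ closeEdges H x then weight H e else 0

open Classical in
/-- Total weight of all edges of `H`. -/
noncomputable def totalWeight [Fintype V] [DecidableEq V] (H : SimpleGraph V) : ℝ :=
  ∑ e : Sym2 V, if e ∈ H.edgeSet then weight H e else 0

/-- `C` is (the vertex set of) a connected component of `B`. -/
def IsComponent (B : SimpleGraph V) (C : Set V) : Prop :=
  C.Nonempty ∧ (∀ u ∈ C, ∀ v, B.Adj u v → v ∈ C) ∧ (B.induce C).Connected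

/-- The star `K_{1,ℓ}` with center `0`. -/
def starG (ℓ : ℕ) : SimpleGraph (Fin (ℓ+1)) :=
  SimpleGraph.fromRel (fun i _ => i = 0)

/-- Disjoint union of two graphs. -/
def sumGraph {α β : Type*} (G : SimpleGraph α) (H : SimpleGraph β) :
    SimpleGraph (α ⊕ β) where
  Adj x y := Sum.LiftRel G.Adj H.Adj x y
  symm := ⟨by rintro (a|a) (b|b) h <;> cases h <;> constructor <;>
    exact SimpleGraph.adj_symm _ ‹_›⟩
  loopless := ⟨by rintro (a|a) h <;> cases h <;> exact SimpleGraph.irrefl _ ‹_›⟩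

/-- Disjoint union of `k` copies of a graph `H`. -/
def copies {β : Type*} (k : ℕ) (H : SimpleGraph β) : SimpleGraph (Fin k × β) where
  Adj p q := p.1 = q.1 ∧ H.Adj p.2 q.2
  symm := ⟨by rintro ⟨a,i⟩ ⟨b,j⟩ ⟨h1,h2⟩; exact ⟨h1.symm, h2.symm⟩⟩
  loopless := ⟨by rintro ⟨a,i⟩ ⟨-,h⟩; exact SimpleGraph.irrefl _ h⟩


open Classical in
lemma sum_sigmaVia_ge [Fintype V] [DecidableEq V] (G : SimpleGraph V)
    (hG : G.Connected) {v w : V} (hne : v ≠ w) (hna : ¬ G.Adj v w) :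
    (1:ℝ) ≤ ∑ x : V, (sigmaVia G v w x : ℝ) / (sigma G v w : ℝ) := by
  haveI : DecidableRel G.Adj := Classical.decRel _
  have hd0 : G.dist v w ≠ 0 :=
    SimpleGraph.dist_ne_zero_iff_ne_and_reachable.mpr ⟨hne, hG v w⟩
  haveI hfin : ∀ x : V,
      Finite {p : G.Walk v w // p.length = G.dist v w ∧ x ∈ p.support ∧ x ≠ v ∧ x ≠ w} := by
    intro x
    exact Finite.of_injective
      (fun p => (⟨p.1, p.2.1⟩ : {p : G.Walk v w // p.length = G.dist v w}))
      (fun a b h => Subtype.ext (by simpa using congrArg Subtype.val h))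
  haveI : ∀ x : V,
      Fintype {p : G.Walk v w // p.length = G.dist v w ∧ x ∈ p.support ∧ x ≠ v ∧ x ≠ w} :=
    fun x => Fintype.ofFinite _
  have hσpos : 0 < sigma G v w := by
    obtain ⟨p, hp⟩ := (hG v w).exists_walk_length_eq_dist
    rw [sigma, Nat.card_eq_fintype_card]
    exact Fintype.card_pos_iff.mpr ⟨⟨p, hp⟩⟩
  -- properties of the second vertex on a shortest walk
  have props : ∀ p : G.Walk v w, p.length = G.dist v w →
      p.getVert 1 ∈ p.support ∧ p.getVert 1 ≠ v ∧ p.getVert 1 ≠ w := by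
    intro p hp
    have hlen : 1 ≤ p.length := by omega
    have hadj : G.Adj v (p.getVert 1) := by
      have := p.adj_getVert_succ (i := 0) (by omega)
      simpa [p.getVert_zero] using this
    refine ⟨Walk.mem_support_iff_exists_getVert.mpr ⟨1, rfl, by omega⟩, ?_, ?_⟩
    · intro h; exact G.irrefl (h ▸ hadj)
    · intro h; exact hna (h ▸ hadj)
  have props' : ∀ (p : G.Walk v w), p.length = G.dist v w → ∀ x, p.getVert 1 = x →
      x ∈ p.support ∧ x ≠ v ∧ x ≠ w := by
    intro p hp x hx; subst hx; exact props p hp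
  have hcount : sigma G v w ≤ ∑ x : V, sigmaVia G v w x := by
    rw [sigma, Nat.card_eq_fintype_card, ← Finset.card_univ,
      Finset.card_eq_sum_card_fiberwise
        (f := fun p : {p : G.Walk v w // p.length = G.dist v w} => p.1.getVert 1)
        (t := Finset.univ) (fun _ _ => Finset.mem_univ _)]
    refine Finset.sum_le_sum ?_
    intro x _
    rw [sigmaVia, Nat.card_eq_fintype_card, ← Fintype.card_subtype]
    refine Fintype.card_le_of_injective
      (fun q => ⟨q.1.1, q.1.2, (props' q.1.1 q.1.2 x q.2).1,
        (props' q.1.1 q.1.2 x q.2).2.1, (props' q.1.1 q.1.2 x q.2).2.2⟩) ?_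
    intro a b h
    exact Subtype.ext (Subtype.ext (by simpa using congrArg Subtype.val h))
  have hσR : (0:ℝ) < (sigma G v w : ℝ) := by exact_mod_cast hσpos
  calc (1:ℝ) = (sigma G v w : ℝ) / (sigma G v w : ℝ) := (div_self hσR.ne').symm
    _ ≤ (∑ x : V, (sigmaVia G v w x : ℝ)) / (sigma G v w : ℝ) := by
        gcongr
        exact_mod_cast hcount
    _ = ∑ x : V, (sigmaVia G v w x : ℝ) / (sigma G v w : ℝ) := Finset.sum_div _ _ _


open Classical in
lemma card_compl_edges_le [Fintype V] [DecidableEq V] (G : SimpleGraph V)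
    (hG : G.Connected) : (Gᶜ.edgeFinset.card : ℝ) ≤ ∑ x : V, btw G x := by
  have hswap : ∑ x : V, btw G x
      = (1/2) * ∑ v : V, ∑ w : V,
          (if v ≠ w then ∑ x : V, (sigmaVia G v w x : ℝ) / (sigma G v w : ℝ) else 0) := by
    unfold btw
    rw [← Finset.mul_sum]
    congr 1
    rw [Finset.sum_comm]
    refine Finset.sum_congr rfl fun v _ => ?_
    rw [Finset.sum_comm]
    refine Finset.sum_congr rfl fun w _ => ?_
    split_ifs with h
    · rfl
    · exact Finset.sum_const_zero
  have hpt : ∀ v w : V, (if Gᶜ.Adj v w then (1:ℝ) else 0)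
      ≤ (if v ≠ w then ∑ x : V, (sigmaVia G v w x : ℝ) / (sigma G v w : ℝ) else 0) := by
    intro v w
    by_cases h : Gᶜ.Adj v w
    · rw [if_pos h, if_pos h.ne]
      exact sum_sigmaVia_ge G hG h.ne ((SimpleGraph.compl_adj G v w).mp h).2
    · rw [if_neg h]
      split_ifs with h'
      · exact Finset.sum_nonneg fun x _ => by positivity
      · exact le_rfl
  have hdeg : ∑ v : V, ∑ w : V, (if Gᶜ.Adj v w then (1:ℝ) else 0)
      = (2 * Gᶜ.edgeFinset.card : ℝ) := by
    have : ∀ v : V, ∑ w : V, (if Gᶜ.Adj v w then (1:ℝ) else 0) = (Gᶜ.degree v : ℝ) := by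
      intro v
      rw [Finset.sum_boole, SimpleGraph.degree]
      congr 2
      ext w
      simp [SimpleGraph.mem_neighborFinset]
    rw [Finset.sum_congr rfl fun v _ => this v, ← Nat.cast_sum,
      SimpleGraph.sum_degrees_eq_twice_card_edges]
    push_cast
    ring
  calc (Gᶜ.edgeFinset.card : ℝ)
      = (1/2) * (2 * Gᶜ.edgeFinset.card : ℝ) := by ring
    _ = (1/2) * ∑ v : V, ∑ w : V, (if Gᶜ.Adj v w then (1:ℝ) else 0) := by rw [hdeg]
    _ ≤ (1/2) * ∑ v : V, ∑ w : V,
          (if v ≠ w then ∑ x : V, (sigmaVia G v w x : ℝ) / (sigma G v w : ℝ) else 0) := by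
        gcongr with v _ w _
        · exact hpt v w
    _ = ∑ x : V, btw G x := hswap.symm

/-- If `G` is connected with `B(G) < 1`, then `Ḡ` has fewer edges than vertices. -/
theorem stmt2 {V : Type*} [Fintype V] [DecidableEq V] (G : SimpleGraph V)
    (hG : G.Connected) (hlow : avgBtw G < 1) :
    Nat.card Gᶜ.edgeSet < Fintype.card V := by
  classical
  have hn : 0 < Fintype.card V := Fintype.card_pos_iff.mpr hG.nonempty
  have hnR : (0:ℝ) < (Fintype.card V : ℝ) := by exact_mod_cast hn
  have hS : ∑ x : V, btw G x < (Fintype.card V : ℝ) := by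
    have := (div_lt_one hnR).mp hlow
    exact this
  have hE : (Gᶜ.edgeFinset.card : ℝ) < (Fintype.card V : ℝ) :=
    lt_of_le_of_lt (card_compl_edges_le G hG) hS
  have hcard : Nat.card Gᶜ.edgeSet = Gᶜ.edgeFinset.card := by
    rw [Nat.card_eq_fintype_card, SimpleGraph.edgeFinset_card]
  rw [hcard]
  exact_mod_cast hE

end BUG
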